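/- arXiv:2602.13819 — 6 statements merged into one kernel-verified Lean document; each statement's English description precedes it below -/
import Mathlib

section
/- Let ⊑ be a preorder on a set X. Then X admits a classwise prelinearization of ⊑: a total preorder ≤ on X such that ⊑ ⊆ ≤, the strict part ⊏ of ⊑ is contained in the strict part < of ≤, and the induced equivalence of ≤ equals the induced equivalence of ⊑ (i.e., x ≤ y and y ≤ x hold if and only if x ⊑ y and y ⊑ x). -/
/-- **Classwise prelinearization.** Every preorder `r` on a set `X` admits a classwise
prelinearization: a total preorder `le` extending `r`, whose strict part contains the strict
part of `r`, and whose induced equivalence coincides with that of `r`. -/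
theorem classwise_prelinearization_exists {X : Type*} (r : X → X → Prop)
    (hrefl : ∀ x, r x x) (htrans : ∀ x y z, r x y → r y z → r x z) :
    ∃ le : X → X → Prop,
      (∀ x y z, le x y → le y z → le x z) ∧
      (∀ x y, le x y ∨ le y x) ∧
      (∀ x y, r x y → le x y) ∧
      (∀ x y, r x y → ¬ r y x → le x y ∧ ¬ le y x) ∧
      (∀ x y, (le x y ∧ le y x) ↔ (r x y ∧ r y x)) := by
  let s : Setoid X :=
    ⟨fun x y => r x y ∧ r y x,
      ⟨fun x => ⟨hrefl x, hrefl x⟩,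
       fun h => ⟨h.2, h.1⟩,
       fun h1 h2 => ⟨htrans _ _ _ h1.1 h2.1, htrans _ _ _ h2.2 h1.2⟩⟩⟩
  let p : Quotient s → Quotient s → Prop :=
    fun a b => Quotient.liftOn₂ a b r
      (fun _ _ _ _ h1 h2 => propext ⟨fun h => htrans _ _ _ h1.2 (htrans _ _ _ h h2.1),
        fun h => htrans _ _ _ h1.1 (htrans _ _ _ h h2.2)⟩)
  have hp : ∀ x y : X, p ⟦x⟧ ⟦y⟧ = r x y := fun _ _ => rfl
  have : IsPartialOrder (Quotient s) p :=
    { refl := fun a => Quotient.inductionOn a (fun x => hrefl x)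
      trans := fun a b c => Quotient.inductionOn₃ a b c (fun x y z => htrans x y z)
      antisymm := fun a b => Quotient.inductionOn₂ a b
        (fun x y h1 h2 => Quotient.sound ⟨h1, h2⟩) }
  obtain ⟨q, hq, hle⟩ := extend_partialOrder p
  refine ⟨fun x y => q ⟦x⟧ ⟦y⟧, ?_, ?_, ?_, ?_, ?_⟩
  · exact fun x y z h1 h2 => hq.1.1.2.1 _ _ _ h1 h2
  · exact fun x y => hq.2.1 _ _
  · exact fun x y h => hle _ _ h
  · intro x y h hn
    refine ⟨hle _ _ h, fun hyx => ?_⟩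
    have : (⟦y⟧ : Quotient s) = ⟦x⟧ := hq.1.2.1 _ _ hyx (hle _ _ h)
    exact hn (Quotient.exact this).1
  · intro x y
    constructor
    · intro ⟨h1, h2⟩
      have : (⟦x⟧ : Quotient s) = ⟦y⟧ := hq.1.2.1 _ _ h1 h2
      exact Quotient.exact this
    · exact fun ⟨h1, h2⟩ => ⟨hle _ _ h1, hle _ _ h2⟩
end

section
/- Let ⊑ be a preorder on a set X and let S be any binary relation on X. Let T be the transitive closure of the relation ⊑ ∪ S. If for all x, y ∈ X with x ⊏ y one has ¬(y T x), then T is a preorder on X with ⊑ ⊆ T and ⊏ contained in the strict part of T, and consequently there exists a prelinearization ≤ of ⊑ with S ⊆ ≤. -/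
/-- Let `r` be a preorder on `X` and `s` any binary relation on `X`. Let `T` be the
transitive closure of `r ∪ s`. If for all `x, y` with `x` strictly `r`-below `y` we have
`¬ T y x`, then `T` is a preorder extending `r` whose strict part contains the strict part
of `r`, and consequently there is a prelinearization `le` of `r` containing `s`. -/
theorem prelinearization_through_transitive_closure {X : Type*} (r s : X → X → Prop)
    (hrefl : ∀ x, r x x) (htrans : ∀ x y z, r x y → r y z → r x z)
    (T : X → X → Prop)
    (hT : T = Relation.TransGen (fun x y => r x y ∨ s x y))
    (hcyc : ∀ x y, r x y → ¬ r y x → ¬ T y x) :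
    -- `T` is a preorder on `X`
    (∀ x, T x x) ∧ (∀ x y z, T x y → T y z → T x z) ∧
    -- `T` extends `r` and its strict part contains the strict part of `r`
    (∀ x y, r x y → T x y) ∧
    (∀ x y, r x y → ¬ r y x → T x y ∧ ¬ T y x) ∧
    -- consequently there is a prelinearization of `r` containing `s`
    (∃ le : X → X → Prop,
      (∀ x y z, le x y → le y z → le x z) ∧
      (∀ x y, le x y ∨ le y x) ∧
      (∀ x y, r x y → le x y) ∧
      (∀ x y, r x y → ¬ r y x → le x y ∧ ¬ le y x) ∧
      (∀ x y, s x y → le x y)) := by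
  subst hT
  set T : X → X → Prop := Relation.TransGen (fun x y => r x y ∨ s x y) with hTdef
  have hrT : ∀ x y, r x y → T x y := fun x y h => Relation.TransGen.single (Or.inl h)
  have hsT : ∀ x y, s x y → T x y := fun x y h => Relation.TransGen.single (Or.inr h)
  have hTrefl : ∀ x, T x x := fun x => hrT x x (hrefl x)
  have hTtrans : ∀ x y z, T x y → T y z → T x z := fun x y z h1 h2 => h1.trans h2
  have hstrict : ∀ x y, r x y → ¬ r y x → T x y ∧ ¬ T y x :=
    fun x y h h' => ⟨hrT x y h, hcyc x y h h'⟩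
  refine ⟨hTrefl, hTtrans, hrT, hstrict, ?_⟩
  -- quotient by T-equivalence
  let st : Setoid X := ⟨fun x y => T x y ∧ T y x,
    ⟨fun x => ⟨hTrefl x, hTrefl x⟩, fun h => ⟨h.2, h.1⟩,
      fun h1 h2 => ⟨h1.1.trans h2.1, h2.2.trans h1.2⟩⟩⟩
  let Q := Quotient st
  let R : Q → Q → Prop := Quotient.lift₂ (fun x y => T x y)
    (by
      intro a b a' b' ha hb
      exact propext ⟨fun h => ha.2.trans (h.trans hb.1),
        fun h => ha.1.trans (h.trans hb.2)⟩)
  have hR : ∀ x y : X, R ⟦x⟧ ⟦y⟧ ↔ T x y := fun x y => Iff.rfl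
  have : IsPartialOrder Q R :=
    { refl := fun q => Quotient.inductionOn q fun x => hTrefl x,
      trans := fun a b c => Quotient.inductionOn₃ a b c fun x y z h1 h2 => h1.trans h2,
      antisymm := fun a b => Quotient.inductionOn₂ a b fun x y h1 h2 =>
        Quotient.sound ⟨h1, h2⟩ }
  obtain ⟨L, hL, hRL⟩ := extend_partialOrder R
  refine ⟨fun x y => L ⟦x⟧ ⟦y⟧, fun x y z => hL.trans _ _ _, fun x y => hL.total _ _,
    fun x y h => hRL _ _ (hrT x y h), ?_, fun x y h => hRL _ _ (hsT x y h)⟩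
  intro x y h h'
  obtain ⟨h1, h2⟩ := hstrict x y h h'
  refine ⟨hRL _ _ h1, fun hyx => ?_⟩
  have := hL.antisymm _ _ hyx (hRL _ _ h1)
  exact h2 (Quotient.exact this).1
end

section
/- Let ⊑ be a preorder on a set X and let R be a binary relation on X that is a prelinearization of ⊑ on its field. Then there exists a prelinearization ≤ of ⊑ on all of X such that R ⊆ ≤ and the strict part of R is contained in the strict part < of ≤ (i.e., if (x, y) ∈ R and (y, x) ∉ R then x < y). -/
/-- The field (domain) of a binary relation `R` on `X`. -/
def relField {X : Type*} (R : Set (X × X)) : Set X :=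
  {x | ∃ y, (x, y) ∈ R ∨ (y, x) ∈ R}

/-- `R` is a prelinearization of the preorder `r` on its field: a total preorder on its
field which extends `r` there and respects the strict part of `r` there. -/
def IsPrelinOnField {X : Type*} (r : X → X → Prop) (R : Set (X × X)) : Prop :=
  (∀ x ∈ relField R, ∀ y ∈ relField R, (x, y) ∈ R ∨ (y, x) ∈ R) ∧
  (∀ x y z, (x, y) ∈ R → (y, z) ∈ R → (x, z) ∈ R) ∧
  (∀ x ∈ relField R, ∀ y ∈ relField R, r x y → (x, y) ∈ R) ∧
  (∀ x ∈ relField R, ∀ y ∈ relField R, r x y → ¬ r y x → (y, x) ∉ R)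

/-- Any reflexive transitive relation extends to a total preorder preserving the
strict part. -/
theorem exists_total_preorder_ext {X : Type*} (s : X → X → Prop)
    (hrefl : ∀ x, s x x) (htrans : ∀ x y z, s x y → s y z → s x z) :
    ∃ le : X → X → Prop,
      (∀ x y z, le x y → le y z → le x z) ∧
      (∀ x y, le x y ∨ le y x) ∧
      (∀ x y, s x y → le x y) ∧
      (∀ x y, s x y → ¬ s y x → ¬ le y x) := by
  let S : Setoid X :=
    ⟨fun x y => s x y ∧ s y x, ⟨fun x => ⟨hrefl x, hrefl x⟩,
      fun h => ⟨h.2, h.1⟩, fun h h' => ⟨htrans _ _ _ h.1 h'.1, htrans _ _ _ h'.2 h.2⟩⟩⟩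
  let q : Quotient S → Quotient S → Prop :=
    Quotient.lift₂ (fun x y => s x y) (by
      intro a b a' b' ha hb
      refine propext ⟨fun h => htrans _ _ _ ha.2 (htrans _ _ _ h hb.1),
        fun h => htrans _ _ _ ha.1 (htrans _ _ _ h hb.2)⟩)
  haveI : IsRefl (Quotient S) q :=
    ⟨fun a => by induction a using Quotient.ind; exact hrefl _⟩
  haveI : IsTrans (Quotient S) q :=
    ⟨fun a b c => by
      induction a using Quotient.ind; induction b using Quotient.ind
      induction c using Quotient.ind; exact htrans _ _ _⟩
  haveI : IsAntisymm (Quotient S) q :=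
    ⟨fun a b => by
      induction a using Quotient.ind; induction b using Quotient.ind
      intro h h'; exact Quotient.sound ⟨h, h'⟩⟩
  haveI : IsPreorder (Quotient S) q := ⟨⟩
  haveI : IsPartialOrder (Quotient S) q := ⟨⟩
  obtain ⟨t, ht, hqt⟩ := extend_partialOrder q
  haveI := ht
  refine ⟨fun x y => t ⟦x⟧ ⟦y⟧, fun x y z => IsTrans.trans (r := t) _ _ _,
    fun x y => total_of t _ _, fun x y h => hqt _ _ h, ?_⟩
  intro x y h h' hle
  have h1 : t ⟦x⟧ ⟦y⟧ := hqt _ _ h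
  have : (⟦y⟧ : Quotient S) = ⟦x⟧ := antisymm hle h1
  exact h' (Quotient.exact this).1

/-- Any partial prelinearization `R` of a preorder `r` (a prelinearization of `r` on its
field) extends to a prelinearization `le` of `r` on all of `X`, preserving both `R` and
its strict part. -/
theorem partial_prelinearization_extends {X : Type*} (r : X → X → Prop)
    (hrefl : ∀ x, r x x) (htrans : ∀ x y z, r x y → r y z → r x z)
    (R : Set (X × X)) (hR : IsPrelinOnField r R) :
    ∃ le : X → X → Prop,
      (∀ x y z, le x y → le y z → le x z) ∧
      (∀ x y, le x y ∨ le y x) ∧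
      (∀ x y, r x y → le x y) ∧
      (∀ x y, r x y → ¬ r y x → le x y ∧ ¬ le y x) ∧
      (∀ x y, (x, y) ∈ R → le x y) ∧
      (∀ x y, (x, y) ∈ R → (y, x) ∉ R → le x y ∧ ¬ le y x) := by
  obtain ⟨hTot, hTrans, hExt, hStrict⟩ := hR
  -- combined preorder
  set s : X → X → Prop := fun x y =>
    r x y ∨ ∃ a b, r x a ∧ (a, b) ∈ R ∧ r b y with hs
  have hfield : ∀ {a b : X}, (a, b) ∈ R → a ∈ relField R ∧ b ∈ relField R := by
    intro a b h; exact ⟨⟨b, Or.inl h⟩, ⟨a, Or.inr h⟩⟩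
  have hsrefl : ∀ x, s x x := fun x => Or.inl (hrefl x)
  have hstrans : ∀ x y z, s x y → s y z → s x z := by
    rintro x y z (h1 | ⟨a, b, hxa, hab, hby⟩) (h2 | ⟨a', b', hya', ha'b', hb'z⟩)
    · exact Or.inl (htrans _ _ _ h1 h2)
    · exact Or.inr ⟨a', b', htrans _ _ _ h1 hya', ha'b', hb'z⟩
    · exact Or.inr ⟨a, b, hxa, hab, htrans _ _ _ hby h2⟩
    · have hba' : (b, a') ∈ R :=
        hExt _ (hfield hab).2 _ (hfield ha'b').1 (htrans _ _ _ hby hya')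
      exact Or.inr ⟨a, b', hxa, hTrans _ _ _ (hTrans _ _ _ hab hba') ha'b', hb'z⟩
  have hsR : ∀ x y, (x, y) ∈ R → s x y := fun x y h =>
    Or.inr ⟨x, y, hrefl x, h, hrefl y⟩
  -- strict part of r is preserved in s
  have hsr_strict : ∀ x y, r x y → ¬ r y x → ¬ s y x := by
    rintro x y hxy hnyx (h | ⟨a, b, hya, hab, hbx⟩)
    · exact hnyx h
    · have hba : r b a := htrans _ _ _ hbx (htrans _ _ _ hxy hya)
      have hnab : ¬ r a b := fun hab' =>
        hnyx (htrans _ _ _ hya (htrans _ _ _ hab' hbx))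
      exact hStrict _ (hfield hab).2 _ (hfield hab).1 hba hnab hab
  have hsR_strict : ∀ x y, (x, y) ∈ R → (y, x) ∉ R → ¬ s y x := by
    rintro x y hxy hnyx (h | ⟨a, b, hya, hab, hbx⟩)
    · exact hnyx (hExt _ (hfield hxy).2 _ (hfield hxy).1 h)
    · have h1 : (y, a) ∈ R := hExt _ (hfield hxy).2 _ (hfield hab).1 hya
      have h2 : (b, x) ∈ R := hExt _ (hfield hab).2 _ (hfield hxy).1 hbx
      exact hnyx (hTrans _ _ _ (hTrans _ _ _ h1 hab) h2)
  obtain ⟨le, hletrans, hletot, hle_s, hle_strict⟩ :=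
    exists_total_preorder_ext s hsrefl hstrans
  refine ⟨le, hletrans, hletot, fun x y h => hle_s _ _ (Or.inl h), ?_, ?_, ?_⟩
  · intro x y h h'
    exact ⟨hle_s _ _ (Or.inl h),
      hle_strict _ _ (Or.inl h) (hsr_strict _ _ h h')⟩
  · exact fun x y h => hle_s _ _ (hsR _ _ h)
  · intro x y h h'
    exact ⟨hle_s _ _ (hsR _ _ h),
      hle_strict _ _ (hsR _ _ h) (hsR_strict _ _ h h')⟩
end

section
/- Fix n ≥ 2 and a finite binary sequence s ∈ 2^{<ω}. Let C_s be the set of n-tuples (a_0, …, a_{n−1}) of finite binary sequences such that each a_i end-extends s, all a_i have the same length, and there is no position l with |s| ≤ l < |a_0| at which a_i(l) = 0 for every i < n; order C_s by coordinatewise reverse end-extension, i.e., (a'_0, …, a'_{n−1}) ≤ (a_0, …, a_{n−1}) iff a'_i end-extends a_i for each i. Let D be a subset of the set of (n−1)-tuples of finite binary sequences that is open dense for coordinatewise end-extension: every (n−1)-tuple has a coordinatewise end-extension in D, and any coordinatewise end-extension of a tuple in D is again in D. Then D' = {(a_0, …, a_{n−1}) ∈ C_s : (a_0, …, a_{n−2})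 ∈ D} is dense in C_s: every element of C_s has a ≤-extension in D'. -/
/-- The forcing `C_s`: `n`-tuples of finite binary sequences (here `false` plays the role
of `0`), all end-extending `s`, all of the same length, with no position `l` with
`|s| ≤ l < |a 0|` at which every coordinate takes the value `0` (i.e. `false`). -/
def CsPoset (n : ℕ) (s : List Bool) : Set (Fin n → List Bool) :=
  {a | (∀ i, s <+: a i) ∧ (∀ i j, (a i).length = (a j).length) ∧
    ¬ ∃ l, s.length ≤ l ∧ (∀ i, l < (a i).length) ∧ (∀ i, (a i).getD l true = false)}

lemma prefix_getD {p q : List Bool} (h : p <+: q) {l : ℕ} (hl : l < p.length) (d : Bool) :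
    q.getD l d = p.getD l d := by
  obtain ⟨t, rfl⟩ := h
  rw [List.getD_append _ _ _ _ hl]

lemma pad_getD (c : List Bool) (k l : ℕ) (hl : c.length ≤ l) :
    (c ++ List.replicate k true).getD l true = true := by
  rw [List.getD_append_right _ _ _ _ hl]
  simp [List.getD]

/-- If `D` is an open dense set of `(n-1)`-tuples of finite binary sequences for
coordinatewise end-extension, then the set of conditions of `C_s` whose first `n-1`
coordinates form a tuple in `D` is dense in `C_s`. -/
theorem dense_projection_in_Cs (n : ℕ) (hn : 2 ≤ n) (s : List Bool)
    (D : Set (Fin (n - 1) → List Bool))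
    (hDdense : ∀ b : Fin (n - 1) → List Bool, ∃ b', (∀ i, b i <+: b' i) ∧ b' ∈ D)
    (hDopen : ∀ b ∈ D, ∀ b' : Fin (n - 1) → List Bool, (∀ i, b i <+: b' i) → b' ∈ D) :
    ∀ a ∈ CsPoset n s, ∃ a' ∈ CsPoset n s, (∀ i, a i <+: a' i) ∧
      (fun i : Fin (n - 1) => a' (Fin.castLE (Nat.sub_le n 1) i)) ∈ D := by
  intro a ha
  obtain ⟨ha1, ha2, ha3⟩ := ha
  obtain ⟨b', hb'ext, hb'D⟩ := hDdense (fun i => a (Fin.castLE (Nat.sub_le n 1) i))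
  set c : Fin n → List Bool := fun j =>
    if h : (j : ℕ) < n - 1 then b' ⟨j, h⟩ else a j with hc
  have hca : ∀ j, a j <+: c j := by
    intro j
    by_cases h : (j : ℕ) < n - 1
    · simp only [hc, dif_pos h]
      have := hb'ext ⟨j, h⟩
      have hj : Fin.castLE (Nat.sub_le n 1) (⟨j, h⟩ : Fin (n - 1)) = j := by
        apply Fin.ext; rfl
      rwa [hj] at this
    · simp [hc, h]
  set m := Finset.univ.sup (fun j : Fin n => (c j).length) with hm
  have hcm : ∀ j, (c j).length ≤ m := fun j => Finset.le_sup (f := fun j : Fin n => (c j).length) (Finset.mem_univ j)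
  set a' : Fin n → List Bool := fun j => c j ++ List.replicate (m - (c j).length) true
    with ha'def
  have hlen : ∀ j, (a' j).length = m := by
    intro j
    simp only [ha'def, List.length_append, List.length_replicate]
    have := hcm j
    omega
  have haa' : ∀ j, a j <+: a' j := fun j => (hca j).trans (List.prefix_append _ _)
  have hjn : (n - 1 : ℕ) < n := by omega
  have hcjn : c ⟨n - 1, hjn⟩ = a ⟨n - 1, hjn⟩ := by simp [hc]
  refine ⟨a', ⟨fun i => (ha1 i).trans (haa' i), fun i j => by rw [hlen i, hlen j], ?_⟩,
    haa', ?_⟩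
  · rintro ⟨l, hl1, hl2, hl3⟩
    -- the last coordinate gives l < old length
    have hlast := hl3 ⟨n - 1, hjn⟩
    have hllt : l < (a ⟨n - 1, hjn⟩).length := by
      by_contra hge
      push_neg at hge
      rw [ha'def] at hlast
      simp only at hlast
      rw [hcjn] at hlast
      rw [pad_getD _ _ _ hge] at hlast
      exact absurd hlast (by simp)
    refine ha3 ⟨l, hl1, fun i => ?_, fun i => ?_⟩
    · rw [ha2 i ⟨n - 1, hjn⟩]; exact hllt
    · have hli : l < (a i).length := by rw [ha2 i ⟨n - 1, hjn⟩]; exact hllt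
      have := hl3 i
      rwa [prefix_getD (haa' i) hli] at this
  · refine hDopen _ hb'D _ (fun i => ?_)
    have h : ((Fin.castLE (Nat.sub_le n 1) i : Fin n) : ℕ) < n - 1 := i.isLt
    have hcb : c (Fin.castLE (Nat.sub_le n 1) i) = b' i := by
      simp only [hc, dif_pos h]
      exact congrArg b' (Fin.ext rfl)
    simp only [ha'def]
    rw [hcb]
    exact List.prefix_append _ _
end

section
/- There is no total preorder ≤ on Baire space ℕ^ℕ such that (i) the induced equivalence relation of ≤ equals E_0, the relation of eventual equality (x E_0 y iff x(n) = y(n) for all but finitely many n), and (ii) the set {(x, y) ∈ ℕ^ℕ × ℕ^ℕ : x ≤ y} has the Baire property in the product space ℕ^ℕ × ℕ^ℕ. Equivalently, the preimage under the quotient projection of any linear order on the quotient ℕ^ℕ / E_0 is a subset of ℕ^ℕ × ℕ^ℕ without the Baire property. -/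
open Set PiNat Topology Filter Function

namespace E0LinearAux

local notation "X" => (ℕ → ℕ)

/-- The union of two meager sets is meager. -/
lemma meagre_union {Y : Type*} [TopologicalSpace Y] {s t : Set Y}
    (hs : IsMeagre s) (ht : IsMeagre t) : IsMeagre (s ∪ t) := by
  rw [IsMeagre, compl_union]
  exact inter_mem hs ht

lemma not_meagre_univ : ¬ IsMeagre (univ : Set (X × X)) := by
  intro h
  rw [IsMeagre, compl_univ] at h
  simpa using (dense_of_mem_residual h).nonempty

/-- The graph of `E₀` is meager in `ℕ^ℕ × ℕ^ℕ`. -/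
lemma meagre_E0 : IsMeagre {p : X × X | {n | p.1 n ≠ p.2 n}.Finite} := by
  have key : ∀ n : ℕ, IsMeagre {p : X × X | ∀ m, n ≤ m → p.1 m = p.2 m} := by
    intro n
    set C : Set (X × X) := {p : X × X | ∀ m, n ≤ m → p.1 m = p.2 m} with hC
    have hclosed : IsClosed C := by
      have : C = ⋂ m, {p : X × X | n ≤ m → p.1 m = p.2 m} := by
        ext p; simp [hC, Set.mem_iInter]
      rw [this]
      refine isClosed_iInter fun m => ?_
      by_cases hm : n ≤ m
      · simp only [hm, true_implies]
        exact isClosed_eq ((continuous_apply m).comp continuous_fst)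
          ((continuous_apply m).comp continuous_snd)
      · simp only [hm, false_implies]
        exact isClosed_univ
    have hint : interior C = ∅ := by
      rw [eq_empty_iff_forall_notMem]
      intro p hp
      have hpC : p ∈ C := interior_subset hp
      have ht : Tendsto (fun k => ((p.1, Function.update p.2 k (p.2 k + 1)) : X × X))
          atTop (𝓝 p) := by
        refine Tendsto.prodMk_nhds tendsto_const_nhds ?_
        rw [tendsto_pi_nhds]
        intro m
        refine Tendsto.congr' ?_ (tendsto_const_nhds : Tendsto (fun _ : ℕ => p.2 m) atTop (𝓝 (p.2 m)))
        filter_upwards [eventually_gt_atTop m] with k hk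
        exact (Function.update_of_ne (by omega) _ _).symm
      have hev : ∀ᶠ k in atTop, ((p.1, Function.update p.2 k (p.2 k + 1)) : X × X) ∈ C ∧ n ≤ k :=
        ((ht.eventually_mem (isOpen_interior.mem_nhds hp)).mono
          fun k hk => interior_subset hk).and (eventually_ge_atTop n)
      obtain ⟨k, hkC, hkn⟩ := hev.exists
      have h1 : p.1 k = Function.update p.2 k (p.2 k + 1) k := hkC k hkn
      have h2 : p.1 k = p.2 k := hpC k hkn
      rw [Function.update_self] at h1
      omega
    have : Cᶜ ∈ residual (X × X) :=
      residual_of_dense_open hclosed.isOpen_compl (by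
        rwa [← interior_eq_empty_iff_dense_compl])
    exact this
  have hsub : {p : X × X | {n | p.1 n ≠ p.2 n}.Finite} ⊆
      ⋃ n : ℕ, {p : X × X | ∀ m, n ≤ m → p.1 m = p.2 m} := by
    intro p hp
    rcases hp.bddAbove with ⟨n, hn⟩
    refine mem_iUnion.2 ⟨n + 1, fun m hm => ?_⟩
    by_contra hne
    exact absurd (hn hne) (by omega)
  exact (isMeagre_iUnion key).mono hsub

/-- The coordinatewise finite "swap" map. -/
def swapFun (s t : X) (N : ℕ) : X → X :=
  fun x i => if i < N then Equiv.swap (s i) (t i) (x i) else x i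

lemma swapFun_continuous (s t : X) (N : ℕ) : Continuous (swapFun s t N) := by
  refine continuous_pi fun i => ?_
  exact (continuous_of_discreteTopology
    (f := fun v : ℕ => if i < N then Equiv.swap (s i) (t i) v else v)).comp (continuous_apply i)

lemma swapFun_involutive (s t : X) (N : ℕ) : Function.Involutive (swapFun s t N) := by
  intro x
  funext i
  by_cases hi : i < N <;> simp [swapFun, hi]

lemma swapFun_finite_diff (s t : X) (N : ℕ) (x : X) :
    {m | swapFun s t N x m ≠ x m}.Finite := by
  refine (finite_Iio N).subset fun m hm => ?_
  by_contra h
  simp only [mem_Iio, not_lt] at h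
  exact hm (by simp [swapFun, Nat.not_lt.2 h])

lemma swapFun_cylinder (s t : X) (N : ℕ) (x : X) :
    x ∈ cylinder s N ↔ swapFun s t N x ∈ cylinder t N := by
  simp only [mem_cylinder_iff]
  refine forall₂_congr fun i hi => ?_
  simp only [swapFun, if_pos hi]
  constructor
  · intro h; rw [h]; exact Equiv.swap_apply_left _ _
  · intro h
    have := congrArg (Equiv.swap (s i) (t i)) h
    rwa [Equiv.swap_apply_self, Equiv.swap_apply_right] at this

lemma swapFun_image_eq_preimage (s t : X) (N : ℕ) (u : Set X) :
    swapFun s t N '' u = swapFun s t N ⁻¹' u := by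
  ext y
  constructor
  · rintro ⟨x, hx, rfl⟩
    rw [Set.mem_preimage, swapFun_involutive s t N x]
    exact hx
  · intro hy
    exact ⟨_, hy, swapFun_involutive s t N y⟩

lemma swapFun_isOpenMap (s t : X) (N : ℕ) : IsOpenMap (swapFun s t N) := by
  intro u hu
  rw [swapFun_image_eq_preimage]
  exact hu.preimage (swapFun_continuous s t N)

/-- Kuratowski-type 0-1 law: a Baire measurable subset of `ℕ^ℕ × ℕ^ℕ` invariant under
coordinatewise eventual equality is meager or comeager. -/
lemma zero_one (S : Set (X × X)) (hBM : BaireMeasurableSet S)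
    (hinv : ∀ p q : X × X, {n | p.1 n ≠ q.1 n}.Finite → {n | p.2 n ≠ q.2 n}.Finite →
      (p ∈ S → q ∈ S)) : IsMeagre S ∨ IsMeagre Sᶜ := by
  obtain ⟨U, Uo, hSU⟩ := hBM.residualEq_isOpen
  have hR : {x : X × X | x ∈ S ↔ x ∈ U} ∈ residual (X × X) := eventuallyEq_set.mp hSU
  rcases eq_empty_or_nonempty U with rfl | ⟨p, hp⟩
  · left
    rw [IsMeagre]
    filter_upwards [hR] with x hx
    simpa using fun h => (hx.mp h)
  · right
    -- find a basic box inside U around p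
    obtain ⟨v, hvmem, hpv, hvU⟩ :=
      ((isTopologicalBasis_cylinders (fun _ : ℕ => ℕ)).prod
        (isTopologicalBasis_cylinders (fun _ : ℕ => ℕ))).exists_subset_of_mem_open hp Uo
    obtain ⟨v1, ⟨a, N1, rfl⟩, v2, ⟨b, N2, rfl⟩, rfl⟩ := hvmem
    set N := max N1 N2 with hN
    have hBU : cylinder p.1 N ×ˢ cylinder p.2 N ⊆ U := by
      refine subset_trans ?_ hvU
      rintro ⟨y1, y2⟩ ⟨h1, h2⟩
      constructor
      · intro i hi
        rw [h1 i (lt_of_lt_of_le hi (le_max_left _ _))]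
        exact hpv.1 i hi
      · intro i hi
        rw [h2 i (lt_of_lt_of_le hi (le_max_right _ _))]
        exact hpv.2 i hi
    -- every box of length N, minus S, is meager
    have hbox : ∀ q : X × X, IsMeagre ((cylinder q.1 N ×ˢ cylinder q.2 N) \ S) := by
      intro q
      set f : X × X → X × X := fun r => (swapFun p.1 q.1 N r.1, swapFun p.2 q.2 N r.2) with hf
      have hfc : Continuous f :=
        ((swapFun_continuous p.1 q.1 N).comp continuous_fst).prodMk
          ((swapFun_continuous p.2 q.2 N).comp continuous_snd)
      have hfo : IsOpenMap f :=
        (swapFun_isOpenMap p.1 q.1 N).prodMap (swapFun_isOpenMap p.2 q.2 N)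
      have hRc : IsMeagre {x : X × X | x ∈ S ↔ x ∈ U}ᶜ := by
        rw [IsMeagre, compl_compl]; exact hR
      refine (hRc.preimage_of_isOpenMap hfc hfo).mono ?_
      rintro y ⟨⟨hy1, hy2⟩, hyS⟩
      have hfy1 : swapFun p.1 q.1 N y.1 ∈ cylinder p.1 N := by
        have := (swapFun_involutive p.1 q.1 N) y.1
        rw [swapFun_cylinder p.1 q.1 N]
        rwa [this]
      have hfy2 : swapFun p.2 q.2 N y.2 ∈ cylinder p.2 N := by
        have := (swapFun_involutive p.2 q.2 N) y.2
        rw [swapFun_cylinder p.2 q.2 N]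
        rwa [this]
      have hfyU : f y ∈ U := hBU ⟨hfy1, hfy2⟩
      have hfyS : f y ∉ S := by
        intro h
        exact hyS (hinv (f y) y (by
            have := swapFun_finite_diff p.1 q.1 N y.1
            exact this.subset fun m hm => hm)
          (by
            have := swapFun_finite_diff p.2 q.2 N y.2
            exact this.subset fun m hm => hm) h)
      intro hmem
      exact hfyS (hmem.mpr hfyU)
    -- cover the complement of S by countably many boxes of length N
    set ext : (Fin N → ℕ) → X := fun u n => if h : n < N then u ⟨n, h⟩ else 0 with hext
    have hcover : Sᶜ ⊆ ⋃ i : (Fin N → ℕ) × (Fin N → ℕ),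
        ((cylinder (ext i.1) N ×ˢ cylinder (ext i.2) N) \ S) := by
      intro x hx
      refine mem_iUnion.2 ⟨⟨fun j => x.1 j, fun j => x.2 j⟩, ⟨⟨?_, ?_⟩, hx⟩⟩
      · intro i hi; simp [hext, hi]
      · intro i hi; simp [hext, hi]
    have hmeager : IsMeagre (⋃ i : (Fin N → ℕ) × (Fin N → ℕ),
        ((cylinder (ext i.1) N ×ˢ cylinder (ext i.2) N) \ S)) := by
      rw [IsMeagre, compl_iUnion]
      exact countable_iInter_mem.mpr fun i => hbox (ext i.1, ext i.2)
    exact hmeager.mono hcover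

end E0LinearAux

open E0LinearAux Set Filter Topology

/-- There is no total preorder on Baire space `ℕ^ℕ` whose induced equivalence relation is
`E₀` (eventual equality) and whose graph has the Baire property in `ℕ^ℕ × ℕ^ℕ`.
Equivalently, the preimage under the quotient projection of a linear order on
`ℕ^ℕ / E₀` never has the Baire property. -/
theorem no_baire_prelinear_order_inducing_E0 :
    ¬ ∃ le : (ℕ → ℕ) → (ℕ → ℕ) → Prop,
      (∀ x y z, le x y → le y z → le x z) ∧
      (∀ x y, le x y ∨ le y x) ∧
      (∀ x y, (le x y ∧ le y x) ↔ {n | x n ≠ y n}.Finite) ∧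
      BaireMeasurableSet {p : (ℕ → ℕ) × (ℕ → ℕ) | le p.1 p.2} := by
  rintro ⟨le, htrans, htotal, hiff, hBM⟩
  set S : Set ((ℕ → ℕ) × (ℕ → ℕ)) := {p | le p.1 p.2 ∧ ¬ le p.2 p.1} with hS
  have hswapc : Continuous (Prod.swap : ((ℕ → ℕ) × (ℕ → ℕ)) → ((ℕ → ℕ) × (ℕ → ℕ))) :=
    continuous_swap
  have hswapo : IsOpenMap (Prod.swap : ((ℕ → ℕ) × (ℕ → ℕ)) → ((ℕ → ℕ) × (ℕ → ℕ))) := by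
    intro u hu
    rw [Set.image_swap_eq_preimage_swap]
    exact hu.preimage continuous_swap
  have hBMS : BaireMeasurableSet S := by
    have h1 : BaireMeasurableSet {p : (ℕ → ℕ) × (ℕ → ℕ) | le p.2 p.1} :=
      hBM.preimage hswapc hswapo
    exact hBM.inter h1.compl
  have hinv : ∀ p q : ((ℕ → ℕ) × (ℕ → ℕ)), {n | p.1 n ≠ q.1 n}.Finite →
      {n | p.2 n ≠ q.2 n}.Finite → (p ∈ S → q ∈ S) := by
    intro p q h1 h2 hpS
    have e1 : le p.1 q.1 ∧ le q.1 p.1 := (hiff p.1 q.1).mpr h1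
    have e2 : le p.2 q.2 ∧ le q.2 p.2 := (hiff p.2 q.2).mpr h2
    refine ⟨htrans _ _ _ e1.2 (htrans _ _ _ hpS.1 e2.1), fun hq => hpS.2 ?_⟩
    exact htrans _ _ _ e2.1 (htrans _ _ _ hq e1.2)
  have hS' : (Prod.swap ⁻¹' S : Set ((ℕ → ℕ) × (ℕ → ℕ))) =
      {p : (ℕ → ℕ) × (ℕ → ℕ) | le p.2 p.1 ∧ ¬ le p.1 p.2} := rfl
  rcases zero_one S hBMS (fun p q h1 h2 => hinv p q h1 h2) with hmeag | hcomeag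
  · -- both S and its swap are meager, and E₀ is meager: the whole space would be meager
    have hmeag' : IsMeagre (Prod.swap ⁻¹' S : Set ((ℕ → ℕ) × (ℕ → ℕ))) :=
      hmeag.preimage_of_isOpenMap hswapc hswapo
    have hcov : (univ : Set ((ℕ → ℕ) × (ℕ → ℕ))) ⊆
        S ∪ (Prod.swap ⁻¹' S) ∪ {p : (ℕ → ℕ) × (ℕ → ℕ) | {n | p.1 n ≠ p.2 n}.Finite} := by
      rintro ⟨x, y⟩ -
      by_cases hxy : le x y
      · by_cases hyx : le y x
        · exact Or.inr ((hiff x y).mp ⟨hxy, hyx⟩)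
        · exact Or.inl (Or.inl ⟨hxy, hyx⟩)
      · rcases htotal x y with h | h
        · exact absurd h hxy
        · exact Or.inl (Or.inr ⟨h, hxy⟩)
    exact not_meagre_univ
      ((meagre_union (meagre_union hmeag hmeag') meagre_E0).mono hcov)
  · -- both S and its swap are comeager, but they are disjoint
    have hcomeag' : IsMeagre ((Prod.swap ⁻¹' S : Set ((ℕ → ℕ) × (ℕ → ℕ)))ᶜ) := by
      have : ((Prod.swap ⁻¹' S : Set ((ℕ → ℕ) × (ℕ → ℕ)))ᶜ) = Prod.swap ⁻¹' Sᶜ := rfl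
      rw [this]
      exact hcomeag.preimage_of_isOpenMap hswapc hswapo
    have hcov : (univ : Set ((ℕ → ℕ) × (ℕ → ℕ))) ⊆
        Sᶜ ∪ (Prod.swap ⁻¹' S : Set ((ℕ → ℕ) × (ℕ → ℕ)))ᶜ := by
      rintro ⟨x, y⟩ -
      by_cases hxy : le x y ∧ ¬ le y x
      · exact Or.inr (fun h => h.2 hxy.1)
      · exact Or.inl hxy
    exact not_meagre_univ ((meagre_union hcomeag hcomeag').mono hcov)
end

section
/- Let ⊑ be a preorder on a set X with strict part ⊏, let Y ⊆ X, and let ⊴ be a prelinearization on Y of the restriction of ⊑ to Y. For each k < 3 let D_k ⊆ X with Y ⊆ D_k, and let R_k be a prelinearization on D_k of the restriction of ⊑ to D_k such that R_k ∩ (Y × Y) = ⊴. Assume: (i) D_i ∩ D_j ⊆ Y for all i ≠ j; and (ii) interpolation: for all i ≠ j and all x ∈ D_i, y ∈ D_j with x ⊑ y, there exists z ∈ Y with x ⊑ z ⊑ y. Then the relation E = ⊏ ∪ strict(R_0) ∪ strict(R_1) ∪ strict(R_2) on X has no directed cycle: there is no finite sequence x_0, x_1, …, x_m with m ≥ 1,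 x_m = x_0, and each consecutive pair (x_i, x_{i+1}) related by E. -/
/-- `R` is a prelinearization on the set `D` of (the restriction to `D` of) the preorder
`r`: `R` only relates elements of `D`, is a total preorder on `D`, extends `r` on `D`,
and respects the strict part of `r` on `D`. -/
def PrelinOn {X : Type*} (r : X → X → Prop) (D : Set X) (R : X → X → Prop) : Prop :=
  (∀ x y, R x y → x ∈ D ∧ y ∈ D) ∧
  (∀ x ∈ D, ∀ y ∈ D, R x y ∨ R y x) ∧
  (∀ x y z, R x y → R y z → R x z) ∧
  (∀ x ∈ D, ∀ y ∈ D, r x y → R x y) ∧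
  (∀ x ∈ D, ∀ y ∈ D, r x y → ¬ r y x → ¬ R y x)

/-- **Acyclicity lemma for (3,2)-balance.** Given a preorder `r` on `X`, a set `Y`, a
prelinearization `les` of `r` on `Y`, and three prelinearizations `R k` of `r` on sets
`D k ⊇ Y` agreeing with `les` on `Y`, such that the `D k` pairwise intersect inside `Y`
and `r`-comparisons across distinct `D i`, `D j` interpolate through `Y`, the union of
the strict part of `r` and the strict parts of the `R k` has no directed cycle. -/
theorem no_cycle_in_strict_union {X : Type*} (r : X → X → Prop)
    (hrefl : ∀ x, r x x) (htrans : ∀ x y z, r x y → r y z → r x z)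
    (Y : Set X) (les : X → X → Prop) (hles : PrelinOn r Y les)
    (D : Fin 3 → Set X) (hYD : ∀ k, Y ⊆ D k)
    (R : Fin 3 → X → X → Prop) (hR : ∀ k, PrelinOn r (D k) (R k))
    (hagree : ∀ k, ∀ x ∈ Y, ∀ y ∈ Y, (R k x y ↔ les x y))
    (hdisj : ∀ i j, i ≠ j → ∀ x, x ∈ D i → x ∈ D j → x ∈ Y)
    (hinterp : ∀ i j, i ≠ j → ∀ x ∈ D i, ∀ y ∈ D j, r x y → ∃ z ∈ Y, r x z ∧ r z y) :
    ¬ ∃ (m : ℕ) (f : ℕ → X), 1 ≤ m ∧ f m = f 0 ∧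
      ∀ i < m, (r (f i) (f (i + 1)) ∧ ¬ r (f (i + 1)) (f i)) ∨
        ∃ k : Fin 3, R k (f i) (f (i + 1)) ∧ ¬ R k (f (i + 1)) (f i) := by
  intro ⟨m, f, hm, hcyc, hedge⟩
  -- unpack prelinearization data
  have Rdom : ∀ k x y, R k x y → x ∈ D k ∧ y ∈ D k := fun k => (hR k).1
  have Rtot : ∀ k, ∀ x ∈ D k, ∀ y ∈ D k, R k x y ∨ R k y x := fun k => (hR k).2.1
  have Rtr : ∀ k x y z, R k x y → R k y z → R k x z := fun k => (hR k).2.2.1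
  have Rext : ∀ k, ∀ x ∈ D k, ∀ y ∈ D k, r x y → R k x y := fun k => (hR k).2.2.2.1
  have Rstr : ∀ k, ∀ x ∈ D k, ∀ y ∈ D k, r x y → ¬ r y x → ¬ R k y x :=
    fun k => (hR k).2.2.2.2
  -- transfer between R indices on Y
  have transfer : ∀ (k j : Fin 3) {u v}, u ∈ Y → v ∈ Y → R k u v → R j u v := by
    intro k j u v hu hv h
    exact (hagree j u hu v hv).2 ((hagree k u hu v hv).1 h)
  -- Qj j a b : a is below b via at most two R-steps, the last with index j
  set Qj : Fin 3 → X → X → Prop :=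
    fun j a b => R j a b ∨ ∃ k u, u ∈ Y ∧ R k a u ∧ R j u b with hQj
  have Qlast : ∀ j a b, Qj j a b → b ∈ D j := by
    intro j a b h
    rcases h with h | ⟨k, u, hu, h1, h2⟩
    · exact (Rdom j a b h).2
    · exact (Rdom j u b h2).2
  have Qfirst : ∀ j a b, Qj j a b → ∃ i, a ∈ D i := by
    intro j a b h
    rcases h with h | ⟨k, u, hu, h1, h2⟩
    · exact ⟨j, (Rdom j a b h).1⟩
    · exact ⟨k, (Rdom k a u h1).1⟩
  -- append one R-step
  have Qstep : ∀ (l j : Fin 3) a b c, Qj l a b → R j b c → Qj j a c := by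
    intro l j a b c hQ hbc
    rcases hQ with h | ⟨k, u, hu, h1, h2⟩
    · by_cases hlj : l = j
      · subst hlj; exact Or.inl (Rtr l a b c h hbc)
      · have hbY : b ∈ Y := hdisj l j hlj b (Rdom l a b h).2 (Rdom j b c hbc).1
        exact Or.inr ⟨l, b, hbY, h, hbc⟩
    · by_cases hlj : l = j
      · subst hlj; exact Or.inr ⟨k, u, hu, h1, Rtr l u b c h2 hbc⟩
      · have hbY : b ∈ Y := hdisj l j hlj b (Rdom l u b h2).2 (Rdom j b c hbc).1
        have : R j u b := transfer l j hu hbY h2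
        exact Or.inr ⟨k, u, hu, h1, Rtr j u b c this hbc⟩
  -- append one r-step landing in D j
  have Qr : ∀ (l j : Fin 3) a b c, Qj l a b → r b c → c ∈ D j → Qj j a c := by
    intro l j a b c hQ hbc hc
    have hb : b ∈ D l := Qlast l a b hQ
    by_cases hlj : l = j
    · subst hlj; exact Qstep l l a b c hQ (Rext l b hb c hc hbc)
    · obtain ⟨z, hz, hbz, hzc⟩ := hinterp l j hlj b hb c hc hbc
      have h1 : Qj l a z := Qstep l l a b z hQ (Rext l b hb z (hYD l hz) hbz)
      exact Qstep l j a z c h1 (Rext j z (hYD j hz) c hc hzc)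
  -- compose two Q's
  have Qcomp : ∀ (i j : Fin 3) a b c, Qj i a b → Qj j b c → Qj j a c := by
    intro i j a b c h1 h2
    rcases h2 with h | ⟨k, u, hu, hbu, huc⟩
    · exact Qstep i j a b c h1 h
    · exact Qstep k j a u c (Qstep i k a b u h1 hbu) huc
  -- Q respects the strict part of r
  have Qstrict : ∀ (j : Fin 3) a b, Qj j a b → r b a → ¬ r a b → False := by
    intro j a b hQ hba hnab
    rcases hQ with h | ⟨k, u, hu, h1, h2⟩
    · exact Rstr j b (Rdom j a b h).2 a (Rdom j a b h).1 hba hnab h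
    · by_cases hkj : k = j
      · subst hkj
        exact Rstr k b (Rdom k u b h2).2 a (Rdom k a u h1).1 hba hnab
          (Rtr k a u b h1 h2)
      · have ha : a ∈ D k := (Rdom k a u h1).1
        have hb : b ∈ D j := (Rdom j u b h2).2
        have huY : u ∈ Y := hu
        obtain ⟨z, hz, hbz, hza⟩ := hinterp j k (fun h => hkj h.symm) b hb a ha hba
        have hRjbz : R j b z := Rext j b hb z (hYD j hz) hbz
        have hRkza : R k z a := Rext k z (hYD k hz) a ha hza
        have hRkzu : R k z u := Rtr k z a u hRkza h1
        have hRjzu : R j z u := transfer k j hz hu hRkzu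
        have hRjzb : R j z b := Rtr j z u b hRjzu h2
        have hrzb : r z b := by
          by_contra hn
          exact Rstr j b hb z (hYD j hz) hbz hn hRjzb
        have hnaz : ¬ r a z := fun h => hnab (htrans a z b h hrzb)
        have hRjuz : R j u z := Rtr j u b z h2 hRjbz
        have hRkuz : R k u z := transfer j k hu hz hRjuz
        have hRkaz : R k a z := Rtr k a u z h1 hRkuz
        exact Rstr k z (hYD k hz) a ha hza hnaz hRkaz
  -- the master relation
  set T : X → X → Prop :=
    fun x y => r x y ∨ ∃ j a b, r x a ∧ Qj j a b ∧ r b y with hT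
  have Ttrans : ∀ x y z, T x y → T y z → T x z := by
    intro x y z h1 h2
    rcases h1 with h1 | ⟨j, a, b, hxa, hQ, hby⟩
    · rcases h2 with h2 | ⟨j, a, b, hya, hQ, hbz⟩
      · exact Or.inl (htrans x y z h1 h2)
      · exact Or.inr ⟨j, a, b, htrans x y a h1 hya, hQ, hbz⟩
    · rcases h2 with h2 | ⟨j', a', b', hya', hQ', hb'z⟩
      · exact Or.inr ⟨j, a, b, hxa, hQ, htrans b y z hby h2⟩
      · obtain ⟨i, ha'⟩ := Qfirst j' a' b' hQ'
        have hba' : r b a' := htrans b y a' hby hya'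
        have h3 : Qj i a a' := Qr j i a b a' hQ hba' ha'
        exact Or.inr ⟨j', a, b', hxa, Qcomp i j' a a' b' h3 hQ', hb'z⟩
  -- every edge lies in the strict part of T
  have hsT : ∀ x y, ((r x y ∧ ¬ r y x) ∨ ∃ k : Fin 3, R k x y ∧ ¬ R k y x) →
      T x y ∧ ¬ T y x := by
    rintro x y (⟨hxy, hnyx⟩ | ⟨j, hxy, hnyx⟩)
    · refine ⟨Or.inl hxy, ?_⟩
      rintro (h | ⟨l, a, b, hya, hQ, hbx⟩)
      · exact hnyx h
      · have hba : r b a := htrans b x a (htrans b x x hbx (hrefl x))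
          (htrans x y a hxy hya)
        have hnab : ¬ r a b := fun h => hnyx (htrans y b x (htrans y a b hya h) hbx)
        exact Qstrict l a b hQ hba hnab
    · have hx : x ∈ D j := (Rdom j x y hxy).1
      have hy : y ∈ D j := (Rdom j x y hxy).2
      refine ⟨Or.inr ⟨j, x, y, hrefl x, Or.inl hxy, hrefl y⟩, ?_⟩
      rintro (h | ⟨l, a, b, hya, hQ, hbx⟩)
      · exact hnyx (Rext j y hy x hx h)
      · have hQax : Qj j a x := Qr l j a b x hQ hbx hx
        rcases hQax with h | ⟨k, u, hu, h1, h2⟩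
        · have ha : a ∈ D j := (Rdom j a x h).1
          exact hnyx (Rtr j y a x (Rext j y hy a ha hya) h)
        · have ha : a ∈ D k := (Rdom k a u h1).1
          by_cases hkj : k = j
          · subst hkj
            exact hnyx (Rtr k y u x (Rtr k y a u (Rext k y hy a ha hya) h1) h2)
          · obtain ⟨z, hz, hyz, hza⟩ :=
              hinterp j k (fun h => hkj h.symm) y hy a ha hya
            have hRjyz : R j y z := Rext j y hy z (hYD j hz) hyz
            have hRkza : R k z a := Rext k z (hYD k hz) a ha hza
            have hRkzu : R k z u := Rtr k z a u hRkza h1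
            have hRjzu : R j z u := transfer k j hz hu hRkzu
            exact hnyx (Rtr j y u x (Rtr j y z u hRjyz hRjzu) h2)
  -- chain the strict edges around the cycle
  have chain : ∀ i, 1 ≤ i → i ≤ m → T (f 0) (f i) ∧ ¬ T (f i) (f 0) := by
    intro i h1 h2
    induction i with
    | zero => omega
    | succ n ih =>
      have hedge' := hsT (f n) (f (n + 1)) (hedge n (by omega))
      rcases Nat.eq_or_lt_of_le h1 with h | h
      · have : n = 0 := by omega
        rw [this] at hedge' ⊢
        exact hedge'
      · have hn : 1 ≤ n := by omega
        obtain ⟨hT1, hT2⟩ := ih hn (by omega)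
        refine ⟨Ttrans _ _ _ hT1 hedge'.1, fun h => ?_⟩
        exact hT2 (Ttrans _ _ _ hedge'.1 h)
  obtain ⟨hT1, hT2⟩ := chain m hm le_rfl
  rw [hcyc] at hT1 hT2
  exact hT2 hT1
end
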